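/- arXiv:math/0208046 — 2 statements merged into one kernel-verified Lean document; each statement's English description precedes it below -/
import Mathlib

section
/- Let n and i be integers with 1 ≤ i ≤ n−1, and let π be a permutation of length n which avoids both 1243 and 2143 and satisfies π(i+1) = n. Then exactly one of the values 1, 2, …, n−i appears among π(1), π(2), …, π(i) (i.e., to the left of the entry n). -/
/-- `π` contains the pattern `σ`. -/
def PContains {k n : ℕ} (σ : Equiv.Perm (Fin k)) (π : Equiv.Perm (Fin n)) : Prop :=
  ∃ f : Fin k → Fin n, StrictMono f ∧ ∀ a b : Fin k, π (f a) < π (f b) ↔ σ a < σ b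

/-- `π` avoids the pattern `σ`. -/
def PAvoids {k n : ℕ} (σ : Equiv.Perm (Fin k)) (π : Equiv.Perm (Fin n)) : Prop :=
  ¬ PContains σ π

/-- The pattern 1243 (in one-line notation, 1-based). -/
def p1243 : Equiv.Perm (Fin 4) := ⟨![0, 1, 3, 2], ![0, 1, 3, 2], by decide, by decide⟩

/-- The pattern 2143 (in one-line notation, 1-based). -/
def p2143 : Equiv.Perm (Fin 4) := ⟨![1, 0, 3, 2], ![1, 0, 3, 2], by decide, by decide⟩

/-- `π` avoids both 1243 and 2143. -/
def AvoidsBoth {n : ℕ} (π : Equiv.Perm (Fin n)) : Prop :=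
  PAvoids p1243 π ∧ PAvoids p2143 π

/-- `τ_k(π)`: the number of increasing subsequences of length `k` in `π`
(with the convention `τ_0 = 0`). -/
noncomputable def tauPerm (k : ℕ) {n : ℕ} (π : Equiv.Perm (Fin n)) : ℕ :=
  if k = 0 then 0 else
    Nat.card {f : Fin k → Fin n // StrictMono f ∧ StrictMono (fun a => π (f a))}

/-- The number of occurrences (subsequences of type `σ`) of the pattern `σ` in `π`. -/
noncomputable def numOcc {k n : ℕ} (σ : Equiv.Perm (Fin k)) (π : Equiv.Perm (Fin n)) : ℕ :=
  Nat.card {f : Fin k → Fin n // StrictMono f ∧ ∀ a b : Fin k, π (f a) < π (f b) ↔ σ a < σ b}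

/-! The entry `n` sits at position `i + 1` with only `n - i - 1` positions to its right, so by
pigeonhole one of the `n - i` values `1, …, n - i` lies to its left. If two of them did, at
positions `j₁ < j₂`, then the `i - 1` values `n - i + 1, …, n - 1` would not fit into the `i - 2`
remaining positions left of `n`; one of them then sits at a position `y` right of `n`, and
`j₁ j₂ (i + 1) y` is an occurrence of 1243 or 2143. -/

open Finset

lemma exists_notMem_apply_mem_of_card_lt {α β : Type*} (e : α ≃ β) {P : Finset α} {V : Finset β}
    (h : #P < #V) : ∃ j ∉ P, e j ∈ V := by
  by_contra! hP
  refine h.not_ge (card_le_card_of_injOn e.symm (fun v hv => ?_) e.symm.injective.injOn)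
  by_contra hvP
  exact hP _ hvP (by simpa using hv)

lemma contains_1243_or_2143 {n : ℕ} (π : Equiv.Perm (Fin n)) {a b c d : Fin n}
    (hab : a < b) (hbc : b < c) (hcd : c < d)
    (had : π a < π d) (hbd : π b < π d) (hdc : π d < π c) :
    PContains p1243 π ∨ PContains p2143 π := by
  have hmono : StrictMono ![a, b, c, d] := by
    refine Fin.strictMono_iff_lt_succ.2 fun x => ?_
    fin_cases x <;> simpa
  rcases lt_or_gt_of_ne (π.injective.ne hab.ne) with h | h
  · refine .inl ⟨_, hmono, fun x y => ?_⟩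
    fin_cases x <;> fin_cases y <;> simp [p1243] <;> order
  · refine .inr ⟨_, hmono, fun x y => ?_⟩
    fin_cases x <;> fin_cases y <;> simp [p2143] <;> order

section
variable {n : ℕ} {π : Equiv.Perm (Fin n)} {m : Fin n}

lemma exists_lt_apply_lt_of_apply_eq (hm₀ : 0 < (m : ℕ)) (hm : (π m : ℕ) = n - 1) :
    ∃ j < m, (π j : ℕ) < n - m := by
  obtain ⟨j, hjm, hj⟩ := exists_notMem_apply_mem_of_card_lt π (P := Ioi m)
    (V := {v | (v : ℕ) < n - m}) (by rw [Fin.card_Ioi, Fin.card_filter_val_lt]; omega)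
  simp only [mem_Ioi, not_lt, mem_filter, mem_univ, true_and] at hjm hj
  refine ⟨j, lt_of_le_of_ne hjm ?_, hj⟩
  rintro rfl
  omega

lemma AvoidsBoth.eq_of_lt_of_apply_lt (hav : AvoidsBoth π) (hm : (π m : ℕ) = n - 1)
    {j₁ j₂ : Fin n} (h₁ : j₁ < m) (h₂ : j₂ < m) (hj₁ : (π j₁ : ℕ) < n - m)
    (hj₂ : (π j₂ : ℕ) < n - m) : j₁ = j₂ := by
  wlog h₁₂ : j₁ < j₂ generalizing j₁ j₂
  · rcases (not_lt.1 h₁₂).lt_or_eq with h | h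
    exacts [(this h₂ h₁ hj₂ hj₁ h).symm, h.symm]
  exfalso
  have hpair : {j₁, j₂} ⊆ Iio m := by
    simp only [insert_subset_iff, singleton_subset_iff, mem_Iio]
    exact ⟨h₁, h₂⟩
  obtain ⟨y, hyP, hyV⟩ := exists_notMem_apply_mem_of_card_lt π (P := Iio m \ {j₁, j₂})
    (V := Ico ⟨n - m, by omega⟩ ⟨n - 1, by omega⟩) (by
      rw [card_sdiff_of_subset hpair, card_pair h₁₂.ne, Fin.card_Iio, Fin.card_Ico]
      simp only [Fin.lt_def] at h₁₂ h₂
      dsimp only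
      omega)
  simp only [mem_sdiff, mem_Iio, mem_insert, mem_singleton, not_and, not_not] at hyP
  simp only [mem_Ico, Fin.le_def, Fin.lt_def] at hyV
  have hmy : m < y := by
    refine lt_of_not_ge fun hym => ?_
    rcases hym.lt_or_eq with hym | rfl
    · rcases hyP hym with rfl | rfl <;> omega
    · omega
  rcases contains_1243_or_2143 π h₁₂ h₂ hmy (by simp only [Fin.lt_def]; omega)
    (by simp only [Fin.lt_def]; omega) (by simp only [Fin.lt_def]; omega) with h | h
  exacts [hav.1 h, hav.2 h]

end

/-- If 1 ≤ i ≤ n−1 and π is a permutation of length n avoiding 1243 and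
2143 with π(i+1) = n (one-line, 1-based), then exactly one of the values 1, …, n−i
appears among π(1), …, π(i), i.e. to the left of the entry n.  (In 0-based terms:
there is exactly one position j < i whose value is < n − i.) -/
theorem stmt_1 (n i : ℕ) (h1 : 1 ≤ i) (h2 : i ≤ n - 1)
    (π : Equiv.Perm (Fin n)) (hav : AvoidsBoth π)
    (hπ : (π ⟨i, by omega⟩ : ℕ) = n - 1) :
    ∃! j : Fin n, j.1 < i ∧ (π j : ℕ) < n - i := by
  obtain ⟨j, hj⟩ := exists_lt_apply_lt_of_apply_eq (m := ⟨i, by omega⟩) h1 hπ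
  exact ⟨j, hj, fun k hk => hav.eq_of_lt_of_apply_lt hπ hk.1 hj.1 hk.2 hj.2⟩
end

section
/- Let τ be a nonempty permutation of length m which avoids both 1243 and 2143, and let τk denote the permutation (τ(1), …, τ(m), m+1) of length m+1. Then the following are equivalent: (a) τ(m) = m (the last entry of τ is its largest entry); (b) for every n ≥ 0, the number of permutations of length n avoiding 1243 and 2143 which avoid τk and contain exactly one subsequence of type τ equals the number of permutations of length n avoiding 1243 and 2143 which contain exactly one subsequence of type τ. -/
/-- Append a new largest entry at the end of a permutation. -/
def appendMax {m : ℕ} (ρ : Equiv.Perm (Fin m)) : Equiv.Perm (Fin (m + 1)) where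
  toFun := Fin.snoc (fun i => (ρ i).castSucc) (Fin.last m)
  invFun := Fin.snoc (fun i => (ρ.symm i).castSucc) (Fin.last m)
  left_inv := by
    intro x
    induction x using Fin.lastCases with
    | last => simp
    | cast i => simp
  right_inv := by
    intro x
    induction x using Fin.lastCases with
    | last => simp
    | cast i => simp

open Equiv

def IsOccurrence {k n : ℕ} (σ : Perm (Fin k)) (π : Perm (Fin n)) (f : Fin k → Fin n) : Prop :=
  StrictMono f ∧ ∀ a b, π (f a) < π (f b) ↔ σ a < σ b

@[simp]
lemma appendMax_castSucc {m : ℕ} (τ : Perm (Fin m)) (i : Fin m) :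
    appendMax τ i.castSucc = (τ i).castSucc := by
  simp [appendMax]

@[simp]
lemma appendMax_last {m : ℕ} (τ : Perm (Fin m)) : appendMax τ (Fin.last m) = Fin.last m := by
  simp [appendMax]

lemma StrictMono.eq_last_of_apply_eq_last {k n : ℕ} {f : Fin (k + 1) → Fin (n + 1)}
    (hf : StrictMono f) {b : Fin (k + 1)} (hb : f b = Fin.last n) : b = Fin.last k :=
  le_antisymm (Fin.le_last b) (hf.maximal_preimage_top hb _)

namespace IsOccurrence

variable {k n : ℕ} {σ : Perm (Fin k)} {π : Perm (Fin n)} {f : Fin k → Fin n}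

lemma of_comp_eq {e : Fin k → Fin n} (he : StrictMono e) (h : ∀ a, π (e a) = e (σ a)) :
    IsOccurrence σ π e :=
  ⟨he, fun a b => by rw [h, h, he.lt_iff_lt]⟩

lemma comp {l : ℕ} {ρ : Perm (Fin l)} {g : Fin l → Fin k} (hf : IsOccurrence σ π f)
    (hg : IsOccurrence ρ σ g) : IsOccurrence ρ π (f ∘ g) :=
  ⟨hf.1.comp hg.1, fun a b => (hf.2 _ _).trans (hg.2 a b)⟩

lemma eq_of_numOcc_eq_one {g : Fin k → Fin n} (h : numOcc σ π = 1) (hf : IsOccurrence σ π f)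
    (hg : IsOccurrence σ π g) : f = g :=
  congrArg Subtype.val ((Nat.card_eq_one_iff_unique.mp h).1.elim ⟨f, hf⟩ ⟨g, hg⟩)

lemma apply_eq_last {σ : Perm (Fin (k + 1))} {π : Perm (Fin (n + 1))}
    {f : Fin (k + 1) → Fin (n + 1)} (hf : IsOccurrence σ π f) {b : Fin (k + 1)}
    (hb : π (f b) = Fin.last n) : σ b = Fin.last k := by
  refine le_antisymm (Fin.le_last _) (not_lt.mp fun hlt => ?_)
  have h := (hf.2 b (σ.symm (Fin.last k))).mpr (by simpa using hlt)
  exact h.not_ge (hb ▸ Fin.le_last _)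

lemma castPred {m : ℕ} {τ : Perm (Fin m)} {f : Fin k → Fin (m + 1)}
    (hf : IsOccurrence σ (appendMax τ) f) (hlast : ∀ a, f a ≠ Fin.last m) :
    IsOccurrence σ τ (fun a => (f a).castPred (hlast a)) := by
  have key : ∀ c, appendMax τ (f c) = (τ ((f c).castPred (hlast c))).castSucc := fun c => by
    rw [← appendMax_castSucc, Fin.castSucc_castPred]
  refine ⟨Fin.strictMono_castPred_comp hlast hf.1, fun a b => ?_⟩
  rw [← hf.2, key, key, Fin.castSucc_lt_castSucc_iff]

end IsOccurrence

lemma isOccurrence_castSucc_appendMax {m : ℕ} (τ : Perm (Fin m)) :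
    IsOccurrence τ (appendMax τ) Fin.castSucc :=
  .of_comp_eq Fin.strictMono_castSucc (appendMax_castSucc τ)

/-- Skipping the position of `τ`'s maximum in `τk` is a second copy of `τ`. -/
lemma isOccurrence_succAbove_appendMax {k : ℕ} {τ : Perm (Fin (k + 1))}
    (hτ : τ (Fin.last k) = Fin.last k) :
    IsOccurrence τ (appendMax τ) (Fin.succAbove (Fin.last k).castSucc) := by
  refine .of_comp_eq (Fin.strictMono_succAbove _) fun a => ?_
  by_cases ha : a = Fin.last k
  · subst ha
    simp [hτ]
  · have hτa : τ a ≠ Fin.last k := hτ ▸ τ.injective.ne ha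
    rw [Fin.succAbove_of_castSucc_lt _ _ (by simpa [Fin.lt_last_iff_ne_last] using ha),
      Fin.succAbove_of_castSucc_lt _ _ (by simpa [Fin.lt_last_iff_ne_last] using hτa),
      appendMax_castSucc]

lemma PAvoids.appendMax {k m : ℕ} {σ : Perm (Fin (k + 1))} {τ : Perm (Fin m)}
    (hσ : σ (Fin.last k) ≠ Fin.last k) (h : PAvoids σ τ) : PAvoids σ (appendMax τ) := by
  rintro ⟨f, hf⟩
  by_cases hlast : ∀ b, f b ≠ Fin.last m
  · exact h ⟨_, IsOccurrence.castPred hf hlast⟩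
  · obtain ⟨b, hb⟩ := not_forall_not.mp hlast
    have hσb : σ b = Fin.last k := IsOccurrence.apply_eq_last hf (by rw [hb, appendMax_last])
    exact hσ (hf.1.eq_last_of_apply_eq_last hb ▸ hσb)

lemma AvoidsBoth.appendMax {m : ℕ} {τ : Perm (Fin m)} (h : AvoidsBoth τ) :
    AvoidsBoth (appendMax τ) :=
  ⟨h.1.appendMax (by decide), h.2.appendMax (by decide)⟩

lemma pAvoids_appendMax_of_numOcc_eq_one {k n : ℕ} {τ : Perm (Fin (k + 1))}
    {π : Perm (Fin n)} (hτ : τ (Fin.last k) = Fin.last k) (h : numOcc τ π = 1) :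
    PAvoids (appendMax τ) π := by
  rintro ⟨f, hf : IsOccurrence _ π f⟩
  have heq := (hf.comp (isOccurrence_castSucc_appendMax τ)).eq_of_numOcc_eq_one h
    (hf.comp (isOccurrence_succAbove_appendMax hτ))
  have hpos := hf.1.injective (congrFun heq (Fin.last k))
  simp at hpos

lemma numOcc_appendMax_self {k : ℕ} {τ : Perm (Fin (k + 1))}
    (hτ : τ (Fin.last k) ≠ Fin.last k) : numOcc τ (appendMax τ) = 1 := by
  have hunique : ∀ g, IsOccurrence τ (appendMax τ) g → g = Fin.castSucc := by
    intro g hg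
    by_cases hlast : ∀ b, g b ≠ Fin.last (k + 1)
    · have hid := (hg.castPred hlast).1.eq_id
      funext a
      simpa using congrArg Fin.castSucc (congrFun hid a)
    · obtain ⟨b, hb⟩ := not_forall_not.mp hlast
      have hτb : τ b = Fin.last k := hg.apply_eq_last (by rw [hb, appendMax_last])
      exact absurd (hg.1.eq_last_of_apply_eq_last hb ▸ hτb) hτ
  rw [numOcc, Nat.card_eq_one_iff_unique]
  exact ⟨⟨fun g h => Subtype.ext ((hunique _ g.2).trans (hunique _ h.2).symm)⟩,
    ⟨⟨_, isOccurrence_castSucc_appendMax τ⟩⟩⟩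

/-- Let τ be a nonempty permutation of length m avoiding 1243 and 2143
and let τk (of length m+1) be τ with a new largest entry appended.  Then the last
entry of τ is its largest entry iff for every n the number of permutations of length n
avoiding 1243, 2143, and τk with exactly one subsequence of type τ equals the number
of permutations of length n avoiding 1243 and 2143 with exactly one subsequence of
type τ. -/
theorem stmt_18 (m : ℕ) (hm : 1 ≤ m) (τ : Equiv.Perm (Fin m)) (hτ : AvoidsBoth τ) :
    (τ ⟨m - 1, by omega⟩ : ℕ) = m - 1 ↔
      ∀ n : ℕ,
        Nat.card {π : Equiv.Perm (Fin n) //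
            AvoidsBoth π ∧ PAvoids (appendMax τ) π ∧ numOcc τ π = 1} =
          Nat.card {π : Equiv.Perm (Fin n) // AvoidsBoth π ∧ numOcc τ π = 1} := by
  obtain ⟨k, rfl⟩ := Nat.exists_eq_add_of_le' hm
  change (τ (Fin.last k) : ℕ) = (Fin.last k : ℕ) ↔ _
  rw [Fin.val_inj]
  constructor
  · intro hmax n
    exact Nat.card_congr <| Equiv.subtypeEquivRight fun π =>
      ⟨fun h => ⟨h.1, h.2.2⟩,
        fun h => ⟨h.1, pAvoids_appendMax_of_numOcc_eq_one hmax h.2, h.2⟩⟩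
  · intro hall
    by_contra hne
    have hssub :
        {π : Perm (Fin (k + 2)) |
            AvoidsBoth π ∧ PAvoids (appendMax τ) π ∧ numOcc τ π = 1} ⊂
          {π | AvoidsBoth π ∧ numOcc τ π = 1} :=
      ⟨fun _ h => ⟨h.1, h.2.2⟩,
        fun hsub => (hsub ⟨hτ.appendMax, numOcc_appendMax_self hne⟩).2.1
          ⟨id, strictMono_id, fun _ _ => Iff.rfl⟩⟩
    exact (Set.toFinite _).card_lt_card hssub |>.ne (hall (k + 2))
end
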